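/- arXiv:2109.13542 — 3 statements merged into one kernel-verified Lean document; each statement's English description precedes it below -/
import Mathlib

section
/- If $\{a_n\}_{n=1}^\infty$ is a sequence of nonnegative reals with $\sum_{n=1}^\infty a_n < +\infty$, then for every $q \in \mathbb{N}$, $\sum_{i=q+1}^\infty a_i + \sum_{l=2}^\infty \sum_{1\le i_1 < i_2 < \cdots < i_l,\ i_l > q} \prod_{k=1}^l a_{i_k} \le \left(\sum_{i=q+1}^\infty a_i\right) \exp\left(\sum_{i=1}^\infty a_i\right)$. -/
open scoped ENNReal
/-!
Every admissible index set `S` (with `max S > q`) is recovered from the pair `(max S, S \ {max S})`,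
and the singleton sets `{i}` from the pairs `(i, ∅)`. Hence the left-hand side is at most
`(∑_{i > q} a_i) · ∑_U ∏_{i ∈ U} a_i`, the sum running over all finite `U ⊆ {1, 2, …}`.
Summing over the subsets of a finite `F` gives `∏_{i ∈ F} (1 + a_i) ≤ exp (∑_{i ∈ F} a_i)`,
which bounds the second factor by `exp (∑ a_i)`.
-/

lemma tsum_finset_prod_le_of_prod_one_add_le {ι : Type*} (p : ι → Prop) (f : ι → ℝ≥0∞)
    {c : ℝ≥0∞} (hc : ∀ F : Finset ι, (∀ i ∈ F, p i) → ∏ i ∈ F, (1 + f i) ≤ c) :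
    ∑' U : {U : Finset ι // ∀ i ∈ U, p i}, ∏ i ∈ U.1, f i ≤ c := by
  classical
  refine ENNReal.tsum_eq_iSup_sum ▸ iSup_le fun A => ?_
  set F : Finset ι := A.sup Subtype.val
  have hF : ∀ i ∈ F, p i := by
    intro i hi
    obtain ⟨U, -, hiU⟩ := Finset.mem_sup.mp hi
    exact U.2 i hiU
  calc ∑ U ∈ A, ∏ i ∈ U.1, f i
      = ∑ V ∈ A.image Subtype.val, ∏ i ∈ V, f i :=
        (Finset.sum_image (f := fun V => ∏ i ∈ V, f i) fun _ _ _ _ => Subtype.ext).symm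
    _ ≤ ∑ V ∈ F.powerset, ∏ i ∈ V, f i := by
        refine Finset.sum_le_sum_of_subset fun V hV => ?_
        obtain ⟨U, hU, rfl⟩ := Finset.mem_image.mp hV
        exact Finset.mem_powerset.mpr (Finset.le_sup hU)
    _ = ∏ i ∈ F, (1 + f i) := (Finset.prod_one_add F).symm
    _ ≤ c := hc F hF

lemma tsum_finset_prod_ofReal_le_exp {ι : Type*} (p : ι → Prop) (a : ι → ℝ)
    (ha : ∀ i, 0 ≤ a i) (hsum : Summable a) :
    ∑' U : {U : Finset ι // ∀ i ∈ U, p i}, ∏ i ∈ U.1, ENNReal.ofReal (a i) ≤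
      ENNReal.ofReal (Real.exp (∑' i : {i // p i}, a i)) := by
  classical
  refine tsum_finset_prod_le_of_prod_one_add_le p _ fun F hF => ?_
  have hsum_le : ∑ i ∈ F, a i ≤ ∑' i : {i // p i}, a i := by
    rw [← Finset.sum_subtype_of_mem a hF]
    exact (hsum.subtype _).sum_le_tsum _ (fun i _ => ha i)
  calc ∏ i ∈ F, (1 + ENNReal.ofReal (a i))
      = ENNReal.ofReal (∏ i ∈ F, (1 + a i)) := by
        rw [ENNReal.ofReal_prod_of_nonneg fun i _ => add_nonneg zero_le_one (ha i)]
        simp_rw [ENNReal.ofReal_add zero_le_one (ha _), ENNReal.ofReal_one]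
    _ ≤ ENNReal.ofReal (Real.exp (∑ i ∈ F, a i)) :=
        ENNReal.ofReal_le_ofReal (Real.prod_one_add_le_exp_sum F ha)
    _ ≤ ENNReal.ofReal (Real.exp (∑' i : {i // p i}, a i)) :=
        ENNReal.ofReal_le_ofReal (Real.exp_le_exp.mpr hsum_le)

lemma tsum_add_tsum_prod_le_mul_tsum (f : ℕ → ℝ≥0∞) (q : ℕ) :
    (∑' i : {i : ℕ // q + 1 ≤ i}, f i) +
      ∑' S : {S : Finset ℕ // 2 ≤ S.card ∧ (∀ i ∈ S, 1 ≤ i) ∧ ∃ i ∈ S, q < i}, ∏ i ∈ S.1, f i ≤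
    (∑' i : {i : ℕ // q + 1 ≤ i}, f i) *
      ∑' U : {U : Finset ℕ // ∀ i ∈ U, 1 ≤ i}, ∏ i ∈ U.1, f i := by
  have hne (S : {S : Finset ℕ // 2 ≤ S.card ∧ (∀ i ∈ S, 1 ≤ i) ∧ ∃ i ∈ S, q < i}) :
      S.1.Nonempty :=
    Finset.card_pos.mp (by omega)
  let splitMax (S : {S : Finset ℕ // 2 ≤ S.card ∧ (∀ i ∈ S, 1 ≤ i) ∧ ∃ i ∈ S, q < i}) :
      {i : ℕ // q + 1 ≤ i} × {U : Finset ℕ // ∀ i ∈ U, 1 ≤ i} :=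
    (⟨S.1.max' (hne S), by
        obtain ⟨i, hi, hqi⟩ := S.2.2.2
        exact hqi.trans_le (S.1.le_max' i hi)⟩,
     ⟨S.1.erase (S.1.max' (hne S)), fun i hi => S.2.2.1 i (Finset.mem_of_mem_erase hi)⟩)
  let toPair := Sum.elim (fun i => (i, ⟨∅, by simp⟩)) splitMax
  have hinj : Function.Injective toPair := by
    refine Function.Injective.sumElim (fun i j h => congrArg Prod.fst h) (fun S T h => ?_)
      (fun i S h => ?_)
    · have hmax : S.1.max' (hne S) = T.1.max' (hne T) := congrArg (·.1.1) h
      have herase : S.1.erase (S.1.max' (hne S)) = T.1.erase (T.1.max' (hne T)) :=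
        congrArg (·.2.1) h
      apply Subtype.ext
      rw [← Finset.insert_erase (S.1.max'_mem (hne S)), herase, hmax,
        Finset.insert_erase (T.1.max'_mem (hne T))]
    · have hempty : S.1.erase (S.1.max' (hne S)) = ∅ := (congrArg (·.2.1) h).symm
      have := Finset.card_erase_of_mem (S.1.max'_mem (hne S))
      rw [hempty, Finset.card_empty] at this
      omega
  calc (∑' i : {i : ℕ // q + 1 ≤ i}, f i) +
        ∑' S : {S : Finset ℕ // 2 ≤ S.card ∧ (∀ i ∈ S, 1 ≤ i) ∧ ∃ i ∈ S, q < i}, ∏ i ∈ S.1, f i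
      = ∑' x, f (toPair x).1 * ∏ i ∈ (toPair x).2.1, f i := by
        rw [ENNReal.summable.tsum_sum ENNReal.summable]
        congr 1
        · simp [toPair]
        · exact tsum_congr fun S => (Finset.mul_prod_erase S.1 f (S.1.max'_mem (hne S))).symm
    _ ≤ ∑' p : {i : ℕ // q + 1 ≤ i} × {U : Finset ℕ // ∀ i ∈ U, 1 ≤ i},
          f p.1 * ∏ i ∈ p.2.1, f i :=
        ENNReal.tsum_comp_le_tsum_of_injective hinj (fun p => f p.1 * ∏ i ∈ p.2.1, f i)
    _ = _ := by
        rw [ENNReal.tsum_prod', ← ENNReal.tsum_mul_right]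
        simp_rw [ENNReal.tsum_mul_left]

theorem stmt0 (a : ℕ → ℝ) (ha : ∀ n, 0 ≤ a n) (hsum : Summable a) (q : ℕ) :
    (∑' i : {i : ℕ // q + 1 ≤ i}, ENNReal.ofReal (a i)) +
      ∑' S : {S : Finset ℕ // 2 ≤ S.card ∧ (∀ i ∈ S, 1 ≤ i) ∧ ∃ i ∈ S, q < i},
        ∏ i ∈ S.1, ENNReal.ofReal (a i) ≤
    (∑' i : {i : ℕ // q + 1 ≤ i}, ENNReal.ofReal (a i)) *
      ENNReal.ofReal (Real.exp (∑' i : {i : ℕ // 1 ≤ i}, a i)) :=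
  (tsum_add_tsum_prod_le_mul_tsum _ q).trans
    (mul_le_mul_right (tsum_finset_prod_ofReal_le_exp _ a ha hsum) _)
end

section
/- If $a_1, \dots, a_n$ are nonnegative real numbers and $q < n$, then $\sum_{i=q+1}^n a_i + \sum_{l=2}^n \sum_{1\le i_1 < \cdots < i_l \le n,\ i_l > q} \prod_{k=1}^l a_{i_k} \le \left(\sum_{i=q+1}^n a_i\right) \exp\left(\sum_{i=1}^n a_i\right)$. -/
open scoped ENNReal
open Matrix Filter

noncomputable section

open Classical in
theorem stmt1 (n q : ℕ) (a : ℕ → ℝ) (ha : ∀ i, 0 ≤ a i) (hq : q < n) :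
    ∑ i ∈ Finset.Icc (q+1) n, a i +
      ∑ S ∈ (Finset.Icc 1 n).powerset.filter (fun S => 2 ≤ S.card ∧ ∃ i ∈ S, q < i),
        ∏ i ∈ S, a i ≤
    (∑ i ∈ Finset.Icc (q+1) n, a i) * Real.exp (∑ i ∈ Finset.Icc 1 n, a i) := by
  classical
  set s := Finset.Icc 1 n with hs
  set T := ∑ i ∈ Finset.Icc (q+1) n, a i with hT
  have hT0 : 0 ≤ T := Finset.sum_nonneg fun i _ => ha i
  -- ∏ (a i + 1) = sum over powerset of products
  have hprod : ∏ i ∈ s, (a i + 1) = ∑ t ∈ s.powerset, ∏ i ∈ t, a i := by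
    rw [Finset.prod_add]
    exact Finset.sum_congr rfl fun t _ => by simp
  have hempty : (∅ : Finset ℕ) ∈ s.powerset := Finset.empty_mem_powerset s
  set B := s.powerset.erase ∅ with hB
  have hsplit : ∑ t ∈ s.powerset, ∏ i ∈ t, a i = 1 + ∑ t ∈ B, ∏ i ∈ t, a i := by
    have h := Finset.add_sum_erase s.powerset (fun t => ∏ i ∈ t, a i) hempty
    simp only [Finset.prod_empty] at h
    exact h.symm
  -- key bound for the second sum
  set A := s.powerset.filter (fun S => 2 ≤ S.card ∧ ∃ i ∈ S, q < i) with hA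
  have supmem : ∀ S : Finset ℕ, S.Nonempty → S.sup id ∈ S := by
    intro S hS
    rw [← Finset.sup'_eq_sup hS]
    exact S.max'_mem hS
  have key : ∑ S ∈ A, ∏ i ∈ S, a i ≤
      ∑ p ∈ (Finset.Icc (q+1) n) ×ˢ B, a p.1 * ∏ i ∈ p.2, a i := by
    have hinj : Set.InjOn (fun S : Finset ℕ => (S.sup id, S.erase (S.sup id))) A := by
      intro S₁ h₁ S₂ h₂ h
      simp only [Finset.mem_coe, hA, Finset.mem_filter, Finset.mem_powerset] at h₁ h₂
      have hne₁ : S₁.Nonempty := Finset.card_pos.mp (by omega)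
      have hne₂ : S₂.Nonempty := Finset.card_pos.mp (by omega)
      have h1 : S₁.sup id = S₂.sup id := congrArg Prod.fst h
      have h2 : S₁.erase (S₁.sup id) = S₂.erase (S₂.sup id) := congrArg Prod.snd h
      have := Finset.insert_erase (supmem S₁ hne₁)
      have := Finset.insert_erase (supmem S₂ hne₂)
      calc S₁ = insert (S₁.sup id) (S₁.erase (S₁.sup id)) :=
              (Finset.insert_erase (supmem S₁ hne₁)).symm
        _ = insert (S₁.sup id) (S₂.erase (S₂.sup id)) := by rw [h2]
        _ = insert (S₂.sup id) (S₂.erase (S₂.sup id)) := by rw [h1]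
        _ = S₂ := Finset.insert_erase (supmem S₂ hne₂)
    calc ∑ S ∈ A, ∏ i ∈ S, a i
        = ∑ p ∈ A.image (fun S => (S.sup id, S.erase (S.sup id))),
            a p.1 * ∏ i ∈ p.2, a i := by
          rw [Finset.sum_image (fun x hx y hy => hinj hx hy)]
          refine Finset.sum_congr rfl fun S hS => ?_
          simp only [hA, Finset.mem_filter, Finset.mem_powerset] at hS
          have hne : S.Nonempty := Finset.card_pos.mp (by omega)
          exact (Finset.mul_prod_erase S a (supmem S hne)).symm
      _ ≤ ∑ p ∈ (Finset.Icc (q+1) n) ×ˢ B, a p.1 * ∏ i ∈ p.2, a i := by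
          apply Finset.sum_le_sum_of_subset_of_nonneg
          · intro p hp
            simp only [Finset.mem_image] at hp
            obtain ⟨S, hS, rfl⟩ := hp
            simp only [hA, Finset.mem_filter, Finset.mem_powerset] at hS
            obtain ⟨hSsub, hcard, i, hiS, hqi⟩ := hS
            have hne : S.Nonempty := Finset.card_pos.mp (by omega)
            have hms : S.sup id ∈ S := supmem S hne
            have hmn : S.sup id ≤ n := (Finset.mem_Icc.mp (hSsub hms)).2
            have hqm : q + 1 ≤ S.sup id := by
              have : i ≤ S.sup id := Finset.le_sup (f := id) hiS
              omega
            refine Finset.mem_product.mpr ⟨Finset.mem_Icc.mpr ⟨hqm, hmn⟩, ?_⟩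
            refine Finset.mem_erase.mpr ⟨?_, Finset.mem_powerset.mpr
              ((Finset.erase_subset _ _).trans hSsub)⟩
            have h1c : 1 ≤ (S.erase (S.sup id)).card := by
              rw [Finset.card_erase_of_mem hms]; omega
            exact (Finset.one_le_card.mp h1c).ne_empty
          · intro p _ _
            exact mul_nonneg (ha p.1) (Finset.prod_nonneg fun i _ => ha i)
  have hsum_prod : ∑ p ∈ (Finset.Icc (q+1) n) ×ˢ B, a p.1 * ∏ i ∈ p.2, a i
      = T * ∑ t ∈ B, ∏ i ∈ t, a i := by
    rw [Finset.sum_product, hT, Finset.sum_mul]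
    exact Finset.sum_congr rfl fun m _ => by rw [Finset.mul_sum]
  have hexp : ∏ i ∈ s, (a i + 1) ≤ Real.exp (∑ i ∈ s, a i) := by
    rw [Real.exp_sum]
    apply Finset.prod_le_prod
    · intro i _; linarith [ha i]
    · intro i _; linarith [Real.add_one_le_exp (a i)]
  calc T + ∑ S ∈ A, ∏ i ∈ S, a i
      ≤ T + T * ∑ t ∈ B, ∏ i ∈ t, a i := by
        rw [← hsum_prod]; linarith [key]
    _ = T * (1 + ∑ t ∈ B, ∏ i ∈ t, a i) := by ring
    _ = T * ∏ i ∈ s, (a i + 1) := by rw [hprod, hsplit]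
    _ ≤ T * Real.exp (∑ i ∈ s, a i) := by
        apply mul_le_mul_of_nonneg_left hexp hT0

end
end

section
/- Let $\{m_i\}_{i \ge 0}$ be a non-decreasing sequence of positive integers. For diagonal $0$-$1$ matrices $J_i \in \mathcal{D}_{m_i}$ ($i \ge k$), define the partial products $Q_n := \prod_{i=k}^n J_i I_{m_i, m_{i-1}}$ (an $m_n \times m_{k-1}$ matrix, product taken in order $J_n I_{m_n,m_{n-1}} \cdots J_k I_{m_k,m_{k-1}}$). Then there exists $J'_k \in \mathcal{D}_{m_{k-1}}$ and $N \in \mathbb{N}$ such that for all $n > N$, $Q_n = I_{m_n, m_{k-1}} J'_k$. -/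
open scoped ENNReal
open Matrix Filter

noncomputable section

/-- The `m' × m` matrix with the identity on top and zero rows below. -/
def Ipad (m' m : ℕ) : Matrix (Fin m') (Fin m) ℝ :=
  Matrix.of fun i j => if (i : ℕ) = (j : ℕ) then 1 else 0

/-- The diagonal entries of an activation matrix are 0 or 1. -/
def ZeroOne {m : ℕ} (J : Fin m → ℝ) : Prop := ∀ i, J i = 0 ∨ J i = 1

/-- The product `(J_n I_{m_n,m_{n-1}}) ⋯ (J_k I_{m_k,m_{k-1}})` (indices shifted down by one). -/
def QProd (m : ℕ → ℕ) (J : ∀ n, Fin (m (n+1)) → ℝ) (k : ℕ) :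
    ∀ t, Matrix (Fin (m (k+t+1))) (Fin (m k)) ℝ
  | 0 => Matrix.diagonal (J k) * Ipad (m (k+1)) (m k)
  | t+1 => (Matrix.diagonal (J (k+t+1)) * Ipad (m (k+t+2)) (m (k+t+1))) * QProd m J k t

/-- Product of diagonal entries along the chain. -/
def Pprod (m : ℕ → ℕ) (hm : Monotone m) (J : ∀ n, Fin (m (n+1)) → ℝ) (k : ℕ)
    (t : ℕ) (j : Fin (m k)) : ℝ :=
  ∏ s ∈ Finset.range (t+1), J (k+s) (Fin.castLE (hm (Nat.le_add_right k (s+1))) j)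

lemma Pprod_succ (m : ℕ → ℕ) (hm : Monotone m) (J : ∀ n, Fin (m (n+1)) → ℝ) (k t : ℕ)
    (j : Fin (m k)) :
    Pprod m hm J k (t+1) j
      = Pprod m hm J k t j * J (k+t+1) (Fin.castLE (hm (Nat.le_add_right k (t+2))) j) := by
  unfold Pprod
  rw [Finset.prod_range_succ]
  rfl

lemma QProd_apply (m : ℕ → ℕ) (hm : Monotone m) (J : ∀ n, Fin (m (n+1)) → ℝ) (k : ℕ)
    (t : ℕ) (i : Fin (m (k+t+1))) (j : Fin (m k)) :
    QProd m J k t i j = if (i : ℕ) = (j : ℕ) then Pprod m hm J k t j else 0 := by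
  induction t with
  | zero =>
      show (Matrix.diagonal (J k) * Ipad (m (k+1)) (m k)) i j = _
      rw [Matrix.diagonal_mul]
      unfold Ipad Pprod
      simp only [Matrix.of_apply, Finset.prod_range_one]
      by_cases h : (i : ℕ) = (j : ℕ)
      · have : i = Fin.castLE (hm (Nat.le_add_right k 1)) j := by
          apply Fin.ext; simpa using h
        simp [h, this]
      · simp [h]
  | succ t ih =>
      show ((Matrix.diagonal (J (k+t+1)) * Ipad (m (k+t+2)) (m (k+t+1))) * QProd m J k t) i j = _
      rw [Matrix.mul_apply]
      by_cases h : (i : ℕ) = (j : ℕ)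
      · have hjlt : (j : ℕ) < m (k+t+1) := lt_of_lt_of_le j.isLt (hm (Nat.le_add_right k (t+1)))
        set l0 : Fin (m (k+t+1)) := ⟨(j : ℕ), hjlt⟩ with hl0
        rw [Finset.sum_eq_single l0]
        · rw [Matrix.diagonal_mul, ih]
          unfold Ipad
          have hil0 : (i : ℕ) = (l0 : ℕ) := by simp [hl0, h]
          have hJeq : J (k+t+1) i
              = J (k+t+1) (Fin.castLE (hm (Nat.le_add_right k (t+2))) j) := by
            congr 1
            apply Fin.ext; simpa using h
          simp only [Matrix.of_apply, hil0, if_pos rfl, hl0]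
          simp [h, Pprod_succ, hJeq]
          ring
        · intro l _ hl
          rw [Matrix.diagonal_mul, ih]
          have : (l : ℕ) ≠ (j : ℕ) := by
            intro he
            apply hl
            apply Fin.ext; simp [hl0, he]
          simp [this]
        · intro habs; exact absurd (Finset.mem_univ l0) habs
      · rw [if_neg h]
        apply Finset.sum_eq_zero
        intro l _
        rw [Matrix.diagonal_mul, ih]
        unfold Ipad
        by_cases hil : (i : ℕ) = (l : ℕ)
        · have : (l : ℕ) ≠ (j : ℕ) := fun he => h (hil.trans he)
          simp [this]
        · simp [hil]

theorem stmt2 (m : ℕ → ℕ) (hpos : ∀ n, 0 < m n) (hmono : ∀ n, m n ≤ m (n+1))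
    (k : ℕ) (J : ∀ n, Fin (m (n+1)) → ℝ) (hJ : ∀ n, ZeroOne (J n)) :
    ∃ J' : Fin (m k) → ℝ, ZeroOne J' ∧ ∃ N : ℕ, ∀ t > N,
      QProd m J k t = Ipad (m (k+t+1)) (m k) * Matrix.diagonal J' := by
  classical
  have hm : Monotone m := monotone_nat_of_le_succ hmono
  set P := Pprod m hm J k with hP
  -- P is 0/1 valued
  have hP01 : ∀ t j, P t j = 0 ∨ P t j = 1 := by
    intro t j
    induction t with
    | zero =>
        unfold P; unfold Pprod
        simpa [Finset.prod_range_one] using hJ k _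
    | succ t ih =>
        rw [hP, Pprod_succ]
        rcases ih with h0 | h1
        · left; rw [← hP, h0]; ring
        · rcases hJ (k+t+1) (Fin.castLE (hm (Nat.le_add_right k (t+2))) j) with h0' | h1'
          · left; rw [h0']; ring
          · right; rw [← hP, h1, h1']; ring
  -- once zero, always zero
  have hzero : ∀ j t t', t ≤ t' → P t j = 0 → P t' j = 0 := by
    intro j t t' htt' h0
    induction t' , htt' using Nat.le_induction with
    | base => exact h0
    | succ n hn ih => rw [hP, Pprod_succ, ← hP, ih]; ring
  -- endpoint for each j
  set Nj : Fin (m k) → ℕ := fun j => if h : ∃ t, P t j = 0 then Nat.find h else 0 with hNj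
  have heventual : ∀ j t, Nj j ≤ t → P t j = P (Nj j) j := by
    intro j t ht
    by_cases h : ∃ t, P t j = 0
    · have h1 : P (Nat.find h) j = 0 := Nat.find_spec h
      have h2 : Nj j = Nat.find h := by simp only [hNj]; exact dif_pos h
      rw [h2] at ht ⊢
      rw [h1, hzero j _ t ht h1]
    · push_neg at h
      have h1 : P t j = 1 := (hP01 t j).resolve_left (h t)
      have h2 : P (Nj j) j = 1 := (hP01 _ j).resolve_left (h _)
      rw [h1, h2]
  set N : ℕ := Finset.univ.sup Nj with hN
  refine ⟨fun j => P N j, fun j => hP01 N j, N, ?_⟩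
  intro t ht
  ext i j
  rw [QProd_apply m hm, Matrix.mul_diagonal]
  unfold Ipad
  simp only [Matrix.of_apply]
  have hNjN : Nj j ≤ N := Finset.le_sup (Finset.mem_univ j)
  have : P t j = P N j := by
    rw [heventual j t (hNjN.trans (le_of_lt ht)), heventual j N hNjN]
  by_cases hij : (i : ℕ) = (j : ℕ)
  · simp only [if_pos hij, one_mul]; exact this
  · simp [hij]

end
end
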